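/- arXiv:1904.09190 — 3 statements merged into one kernel-verified Lean document; each statement's English description precedes it below -/
import Mathlib

section
/- Let K be a field, E a K-vector space, V an abelian group and U a subgroup of V such that K ⊗_ℤ (V/U) = 0. Let f : V/U × V → E be a function such that for every c ∈ V/U the function f(c,−) : V → E is polynomial in the sense of Eilenberg–Mac Lane. If f(x mod U, x) = 0 for all x ∈ V, then f is identically zero. Equivalently, the restriction to such functions of the map E^{V/U × V} → E^V induced by the homomorphism V → V/U × V whose components are the projection and the identity is injective. -/
noncomputable section

/-- The `d`-th Eilenberg–Mac Lane deviation of a function between abelian groups. -/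
def emlDeviation {U V : Type*} [AddCommGroup U] [AddCommGroup V]
    (d : ℕ) (f : U → V) (u : Fin d → U) : V :=
  ∑ I : Finset (Fin d), ((-1 : ℤ) ^ (d - I.card)) • f (∑ i ∈ I, u i)

/-- `f` is polynomial of degree at most `d` in the sense of Eilenberg–Mac Lane. -/
def IsEMLPolynomialOfDegLE {U V : Type*} [AddCommGroup U] [AddCommGroup V]
    (f : U → V) (d : ℕ) : Prop :=
  ∀ u : Fin (d + 1) → U, emlDeviation (d + 1) f u = 0

/-- `f` is polynomial in the sense of Eilenberg–Mac Lane. -/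
def IsEMLPolynomial {U V : Type*} [AddCommGroup U] [AddCommGroup V] (f : U → V) : Prop :=
  ∃ d, IsEMLPolynomialOfDegLE f d

/-! ### Auxiliary lemmas -/

lemma sum_powerset_map' {α β M : Type*} [AddCommMonoid M] (e : α ↪ β)
    (s : Finset α) (F : Finset β → M) :
    ∑ t ∈ (s.map e).powerset, F t = ∑ J ∈ s.powerset, F (J.map e) := by
  refine (Finset.sum_nbij' (i := fun J : Finset α => J.map e)
    (j := fun t : Finset β => t.preimage e e.injective.injOn) ?_ ?_ ?_ ?_ ?_).symm
  · intro J hJ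
    simp only [Finset.mem_powerset] at *
    exact Finset.map_subset_map.2 hJ
  · intro t ht
    simp only [Finset.mem_powerset] at *
    intro x hx
    have : e x ∈ t := (Finset.mem_preimage).1 hx
    have := ht this
    rcases Finset.mem_map.1 this with ⟨y, hy, hxy⟩
    rwa [← e.injective hxy]
  · intro J _; exact Finset.preimage_map e J
  · intro t ht
    simp only [Finset.mem_powerset] at ht
    ext y
    simp only [Finset.mem_map, Finset.mem_preimage]
    constructor
    · rintro ⟨x, hx, rfl⟩; exact hx
    · intro hy
      rcases Finset.mem_map.1 (ht hy) with ⟨x, _, rfl⟩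
      exact ⟨x, hy, rfl⟩
  · intro J _; rfl

lemma emlDeviation_succ {V E : Type*} [AddCommGroup V] [AddCommGroup E]
    (d : ℕ) (f : V → E) (u : Fin (d+1) → V) :
    emlDeviation (d+1) f u
      = emlDeviation d (fun v => f (v + u (Fin.last d)) - f v) (u ∘ Fin.castSucc) := by
  unfold emlDeviation
  rw [← Finset.powerset_univ, Fin.univ_castSuccEmb, Finset.cons_eq_insert,
    Finset.sum_powerset_insert (by simp [Fin.ext_iff]; exact fun x => x.isLt.ne),
    sum_powerset_map', sum_powerset_map', Finset.powerset_univ]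
  rw [← Finset.sum_add_distrib]
  refine Finset.sum_congr rfl fun J _ => ?_
  have hJ : Fin.last d ∉ J.map Fin.castSuccEmb := by
    simp [Fin.ext_iff]; exact fun x _ => x.isLt.ne
  rw [Finset.card_insert_of_notMem hJ, Finset.sum_insert hJ, Finset.card_map, Finset.sum_map,
    smul_sub]
  have hc : J.card ≤ d := by simpa using Finset.card_le_univ J
  have h1 : d + 1 - J.card = (d - J.card) + 1 := by omega
  have h2 : d + 1 - (J.card + 1) = d - J.card := by omega
  rw [h1, h2, pow_succ, mul_neg_one, neg_smul]
  have harg : ∀ i : Fin d, u (Fin.castSuccEmb i) = (u ∘ Fin.castSucc) i := fun i => rfl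
  simp only [harg]
  rw [add_comm (u (Fin.last d))]
  abel

section aux
variable {V E : Type*} [AddCommGroup V] [AddCommGroup E]

lemma emlDeviation_zero (f : V → E) (u : Fin 0 → V) :
    emlDeviation 0 f u = f 0 := by
  unfold emlDeviation
  rw [Finset.univ_unique]
  simp [Subsingleton.elim (default : Finset (Fin 0)) ∅]

lemma emlDeviation_sub (d : ℕ) (f g : V → E) (u : Fin d → V) :
    emlDeviation d (fun v => f v - g v) u = emlDeviation d f u - emlDeviation d g u := by
  unfold emlDeviation
  rw [← Finset.sum_sub_distrib]
  exact Finset.sum_congr rfl fun I _ => smul_sub _ _ _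

lemma emlDeviation_snoc (d : ℕ) (f : V → E) (u : Fin d → V) (w : V) :
    emlDeviation (d+1) f (Fin.snoc u w)
      = emlDeviation d (fun v => f (v + w) - f v) u := by
  rw [emlDeviation_succ]
  congr 1
  · simp
  · funext i
    simp [Fin.snoc_castSucc]

lemma degLE_diff {d : ℕ} {f : V → E} (hf : IsEMLPolynomialOfDegLE f (d+1)) (w : V) :
    IsEMLPolynomialOfDegLE (fun v => f (v + w) - f v) d := by
  intro u
  rw [← emlDeviation_snoc]
  exact hf (Fin.snoc u w)

lemma deviation_snoc_additive {d : ℕ} {f : V → E} (hf : IsEMLPolynomialOfDegLE f (d+1))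
    (u : Fin d → V) (a b : V) :
    emlDeviation (d+1) f (Fin.snoc u (a+b))
      = emlDeviation (d+1) f (Fin.snoc u a) + emlDeviation (d+1) f (Fin.snoc u b) := by
  rw [emlDeviation_snoc, emlDeviation_snoc, emlDeviation_snoc]
  have key : (fun v => (fun x => f (x + b) - f x) (v + a) - (fun x => f (x + b) - f x) v)
      = fun v => (fun x => f (x + (a+b)) - f x) v - ((fun x => f (x + a) - f x) v
          + (fun x => f (x + b) - f x) v) := by
    funext v
    simp only
    have e1 : v + a + b = v + (a + b) := by abel
    rw [e1]
    abel
  have h0 : emlDeviation d (fun v => (fun x => f (x + b) - f x) (v + a)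
      - (fun x => f (x + b) - f x) v) u = 0 := by
    have := degLE_diff hf b (Fin.snoc u a)
    rwa [emlDeviation_snoc] at this
  rw [key] at h0
  have h1 : (fun v => (fun x => f (x + (a+b)) - f x) v - ((fun x => f (x + a) - f x) v
      + (fun x => f (x + b) - f x) v))
      = fun v => (fun x => f (x + (a+b)) - f x) v
          - (fun v => (fun x => f (x + a) - f x) v + (fun x => f (x + b) - f x) v) v := rfl
  rw [h1, emlDeviation_sub] at h0
  have h2 : emlDeviation d (fun v => (fun x => f (x + a) - f x) v
      + (fun x => f (x + b) - f x) v) u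
      = emlDeviation d (fun x => f (x + a) - f x) u
        + emlDeviation d (fun x => f (x + b) - f x) u := by
    unfold emlDeviation
    rw [← Finset.sum_add_distrib]
    exact Finset.sum_congr rfl fun I _ => smul_add _ _ _
  rw [h2] at h0
  linear_combination (norm := abel) h0

end aux

lemma addhom_eq_zero (K : Type*) [Field K] {A : Type*} [AddCommGroup A] {E : Type*}
    [AddCommGroup E] [Module K E]
    (hU : Subsingleton (TensorProduct ℤ K A)) (h : A →+ E) (a : A) : h a = 0 := by
  let B : K →ₗ[ℤ] A →ₗ[ℤ] E :=
    LinearMap.mk₂ ℤ (fun k a => k • h a)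
      (fun k₁ k₂ a => add_smul k₁ k₂ (h a))
      (fun c k a => by rw [smul_assoc])
      (fun k a₁ a₂ => by rw [map_add, smul_add])
      (fun c k a => by rw [map_zsmul, smul_comm])
  let φ := TensorProduct.lift B
  have : h a = φ ((1 : K) ⊗ₜ[ℤ] a) := by
    simp [φ, B, TensorProduct.lift.tmul]
  rw [this, Subsingleton.elim ((1 : K) ⊗ₜ[ℤ] a) 0, map_zero]

lemma degree_reduce (K : Type*) [Field K] {A : Type*} [AddCommGroup A] {E : Type*}
    [AddCommGroup E] [Module K E] (hU : Subsingleton (TensorProduct ℤ K A))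
    {f : A → E} {d : ℕ} (hf : IsEMLPolynomialOfDegLE f (d+1)) :
    IsEMLPolynomialOfDegLE f d := by
  intro u
  have hu : u = Fin.snoc (Fin.init u) (u (Fin.last d)) := (Fin.snoc_init_self u).symm
  rw [hu]
  let h : A →+ E := AddMonoidHom.mk' (fun w => emlDeviation (d+1) f (Fin.snoc (Fin.init u) w))
    (fun a b => deviation_snoc_additive hf (Fin.init u) a b)
  exact addhom_eq_zero K hU h (u (Fin.last d))

lemma reduce_to_zero (K : Type*) [Field K] {A : Type*} [AddCommGroup A] {E : Type*}
    [AddCommGroup E] [Module K E] (hU : Subsingleton (TensorProduct ℤ K A))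
    {f : A → E} : ∀ {d : ℕ}, IsEMLPolynomialOfDegLE f d → IsEMLPolynomialOfDegLE f 0 := by
  intro d
  induction d with
  | zero => exact id
  | succ d ih => exact fun h => ih (degree_reduce K hU h)

lemma const_of_degLE_zero {A E : Type*} [AddCommGroup A] [AddCommGroup E]
    {f : A → E} (hf : IsEMLPolynomialOfDegLE f 0) (v : A) : f v = f 0 := by
  have h := hf (Fin.snoc (fun _ : Fin 0 => 0) v)
  rw [emlDeviation_snoc, emlDeviation_zero] at h
  have : f (0 + v) - f 0 = 0 := h
  rw [zero_add] at this
  exact sub_eq_zero.1 this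

lemma keylemma (K : Type*) [Field K] (E : Type*) [AddCommGroup E] [Module K E]
    (V : Type*) [AddCommGroup V] (U : AddSubgroup V)
    (hU : Subsingleton (TensorProduct ℤ K (V ⧸ U))) :
    ∀ (d : ℕ) (g : V → E), IsEMLPolynomialOfDegLE g d →
      ∀ x₀ : V, (∀ u ∈ U, g (x₀ + u) = 0) → ∀ v, g v = 0 := by
  intro d
  induction d with
  | zero =>
    intro g hg x₀ h0 v
    have h1 := const_of_degLE_zero hg v
    have h2 := const_of_degLE_zero hg (x₀ + 0)
    rw [h1, ← h2, h0 0 U.zero_mem]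
  | succ d ih =>
    intro g hg x₀ h0
    have step1 : ∀ w ∈ U, ∀ v, g (v + w) = g v := by
      intro w hw
      have hgw : IsEMLPolynomialOfDegLE (fun v => g (v + w) - g v) d := degLE_diff hg w
      have hvanish : ∀ u ∈ U, (fun v => g (v + w) - g v) (x₀ + u) = 0 := by
        intro u hu
        dsimp only
        have e : x₀ + u + w = x₀ + (u + w) := by abel
        rw [e, h0 _ (U.add_mem hu hw), h0 _ hu, sub_zero]
      intro v
      have hv := ih _ hgw x₀ hvanish v
      exact sub_eq_zero.1 hv
    have ginv : ∀ a b : V, (QuotientAddGroup.mk a : V ⧸ U) = QuotientAddGroup.mk b →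
        g a = g b := by
      intro a b hab
      have hmem : -a + b ∈ U := (QuotientAddGroup.eq).1 hab
      have e : b = a + (-a + b) := by abel
      rw [e, step1 _ hmem a]
    set gbar : V ⧸ U → E := fun c => g c.out with hgbar
    have hbar : ∀ x : V, gbar (QuotientAddGroup.mk x) = g x := by
      intro x
      apply ginv
      exact Quotient.out_eq _
    have hbarpoly : IsEMLPolynomialOfDegLE gbar (d+1) := by
      intro c
      have key : emlDeviation (d+1+1) gbar c
          = emlDeviation (d+1+1) g (fun i => (c i).out) := by
        unfold emlDeviation
        refine Finset.sum_congr rfl fun I _ => ?_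
        congr 1
        show gbar (∑ i ∈ I, c i) = g (∑ i ∈ I, (c i).out)
        rw [← hbar (∑ i ∈ I, (c i).out)]
        congr 1
        show ∑ i ∈ I, c i = QuotientAddGroup.mk (∑ i ∈ I, (c i).out)
        have : ∀ i ∈ I, c i = (QuotientAddGroup.mk' U) ((c i).out) := by
          intro i _
          exact (Quotient.out_eq (c i)).symm
        rw [Finset.sum_congr rfl this, ← map_sum]
        rfl
      rw [key]
      exact hg _
    have h0bar : IsEMLPolynomialOfDegLE gbar 0 := reduce_to_zero K hU hbarpoly
    intro v
    rw [← hbar v, const_of_degLE_zero h0bar, ← const_of_degLE_zero h0bar (QuotientAddGroup.mk x₀),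
      hbar x₀]
    have := h0 0 U.zero_mem
    rwa [add_zero] at this

/-- If `K ⊗_ℤ (V/U) = 0` and `f : V/U × V → E` is Eilenberg–Mac Lane polynomial in the second
variable and vanishes on the graph of the projection `V → V/U`, then `f` is identically zero. -/
theorem eml_polynomial_vanishing_on_graph
    (K : Type u) [Field K] (E : Type v) [AddCommGroup E] [Module K E]
    (V : Type w) [AddCommGroup V] (U : AddSubgroup V)
    (hU : Subsingleton (TensorProduct ℤ K (V ⧸ U)))
    (f : (V ⧸ U) × V → E)
    (hf : ∀ c : V ⧸ U, IsEMLPolynomial fun v : V => f (c, v))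
    (hzero : ∀ x : V, f (QuotientAddGroup.mk x, x) = 0) :
    ∀ y : (V ⧸ U) × V, f y = 0 := by
  rintro ⟨c, v⟩
  obtain ⟨d, hd⟩ := hf c
  refine keylemma K E V U hU d (fun x => f (c, x)) hd c.out ?_ v
  intro u hu
  have hmk : (QuotientAddGroup.mk (c.out + u) : V ⧸ U) = c := by
    have h1 : (QuotientAddGroup.mk (c.out + u) : V ⧸ U)
        = QuotientAddGroup.mk c.out + QuotientAddGroup.mk u := rfl
    rw [h1, (QuotientAddGroup.eq_zero_iff u).2 hu, add_zero]
    exact Quotient.out_eq c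
  have := hzero (c.out + u)
  rwa [hmk] at this
end
end

section
/- Let U and V be abelian groups with V uniquely divisible (i.e., a ℚ-vector space), and let f : U → V be a polynomial function in the sense of Eilenberg–Mac Lane. Then f decomposes uniquely as a sum f = Σ_{d∈ℕ} f_d with all but finitely many f_d equal to zero, where each f_d : U → V is a polynomial function satisfying f_d(λ·u) = λ^d·f_d(u) for all λ ∈ ℤ and all u ∈ U. -/
noncomputable section

namespace EMLAux

variable {U V : Type*} [AddCommGroup U] [AddCommGroup V]

def devB (d : ℕ) (f : U → V) (u : Fin d → U) : V :=
  ∑ ε : Fin d → Bool, ((-1 : ℤ) ^ (d - (Finset.univ.filter fun i => ε i = true).card)) •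
    f (∑ i ∈ Finset.univ.filter (fun i => ε i = true), u i)

def boolEquiv (d : ℕ) : (Fin d → Bool) ≃ Finset (Fin d) where
  toFun ε := Finset.univ.filter fun i => ε i = true
  invFun I := fun i => decide (i ∈ I)
  left_inv := by intro ε; funext i; simp
  right_inv := by intro I; ext i; simp

lemma devB_eq (d : ℕ) (f : U → V) (u : Fin d → U) :
    devB d f u = emlDeviation d f u := by
  unfold devB emlDeviation
  exact Equiv.sum_comp (boolEquiv d)
    (fun I => ((-1 : ℤ) ^ (d - I.card)) • f (∑ i ∈ I, u i))

lemma filter_cons_card (d : ℕ) (b : Bool) (ε : Fin d → Bool) :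
    (Finset.univ.filter fun i : Fin (d+1) => (Fin.cons b ε : Fin (d+1) → Bool) i = true).card
      = (if b then 1 else 0) + (Finset.univ.filter fun i => ε i = true).card := by
  rw [Finset.card_filter, Finset.card_filter, Fin.sum_univ_succ]
  simp [Fin.cons_zero, Fin.cons_succ]

lemma filter_cons_sum (d : ℕ) (b : Bool) (ε : Fin d → Bool) (w : U) (v : Fin d → U) :
    (∑ i ∈ Finset.univ.filter (fun i : Fin (d+1) => (Fin.cons b ε : Fin (d+1) → Bool) i = true),
        (Fin.cons w v : Fin (d+1) → U) i)
      = (if b then w else 0) + ∑ i ∈ Finset.univ.filter (fun i => ε i = true), v i := by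
  rw [Finset.sum_filter, Finset.sum_filter, Fin.sum_univ_succ]
  simp [Fin.cons_zero, Fin.cons_succ]

lemma devB_cons (d : ℕ) (f : U → V) (w : U) (v : Fin d → U) :
    devB (d + 1) f (Fin.cons w v) = devB d (fun x => f (w + x) - f x) v := by
  have h1 := (Equiv.sum_comp (Fin.consEquiv (fun _ : Fin (d+1) => Bool))
    (fun ε : Fin (d+1) → Bool =>
      ((-1 : ℤ) ^ (d + 1 - (Finset.univ.filter fun i => ε i = true).card)) •
        f (∑ i ∈ Finset.univ.filter (fun i => ε i = true),
            (Fin.cons w v : Fin (d+1) → U) i))).symm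
  rw [devB, h1, Fintype.sum_prod_type, Fintype.sum_bool, devB, ← Finset.sum_add_distrib]
  refine Finset.sum_congr rfl fun ε _ => ?_
  have hc : (Finset.univ.filter fun i => ε i = true).card ≤ d := by
    simpa using Finset.card_filter_le Finset.univ (fun i => ε i = true)
  simp only [Fin.consEquiv_apply]
  rw [filter_cons_card, filter_cons_card, filter_cons_sum, filter_cons_sum]
  simp only [Bool.false_eq_true, if_false, if_true]
  set c := (Finset.univ.filter fun i => ε i = true).card with hcdef
  set S := ∑ i ∈ Finset.univ.filter (fun i => ε i = true), v i with hS
  have e1 : d + 1 - (1 + c) = d - c := by omega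
  have e2 : d + 1 - (0 + c) = (d - c) + 1 := by omega
  rw [e1, e2, pow_succ, zero_add]
  rw [mul_neg_one, neg_smul, smul_sub]
  abel

lemma degLE_translate {f : U → V} {N : ℕ} (hf : IsEMLPolynomialOfDegLE f (N + 1)) (w : U) :
    IsEMLPolynomialOfDegLE (fun x => f (w + x) - f x) N := by
  intro v
  rw [← devB_eq, ← devB_cons, devB_eq]
  exact hf (Fin.cons w v)

lemma degLE_zero_const {f : U → V} (hf : IsEMLPolynomialOfDegLE f 0) (x : U) : f x = f 0 := by
  have h := hf (fun _ => x)
  rw [← devB_eq] at h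
  have hx : (Fin.cons x (Fin.elim0) : Fin 1 → U) = fun _ => x := by
    funext i
    refine Fin.cases ?_ (fun j => j.elim0) i
    rfl
  rw [← hx, devB_cons] at h
  have : devB 0 (fun y => f (x + y) - f y) Fin.elim0 = f x - f 0 := by
    rw [devB]
    rw [Fintype.sum_eq_single (fun i : Fin 0 => false)
      (by intro e he; exact absurd (funext fun i => i.elim0) he)]
    simp
  rw [this] at h
  exact sub_eq_zero.1 h

def D (g : ℤ → V) : ℤ → V := fun n => g (n + 1) - g n

lemma D_iter_sum (m : ℕ) {ι : Type*} (s : Finset ι) (g : ι → ℤ → V) :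
    D^[m] (fun n => ∑ k ∈ s, g k n) = fun n => ∑ k ∈ s, D^[m] (g k) n := by
  induction m generalizing g with
  | zero => simp
  | succ m ih =>
    rw [Function.iterate_succ_apply]
    have h1 : D (fun n => ∑ k ∈ s, g k n) = fun n => ∑ k ∈ s, D (g k) n := by
      funext n; simp [D, Finset.sum_sub_distrib]
    rw [h1, ih]
    funext n
    exact Finset.sum_congr rfl fun k _ => by rw [← Function.iterate_succ_apply]

lemma D_iter_sub (m : ℕ) (g₁ g₂ : ℤ → V) :
    D^[m] (fun n => g₁ n - g₂ n) = fun n => D^[m] g₁ n - D^[m] g₂ n := by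
  induction m generalizing g₁ g₂ with
  | zero => simp
  | succ m ih =>
    rw [Function.iterate_succ_apply]
    have h1 : D (fun n => g₁ n - g₂ n) = fun n => D g₁ n - D g₂ n := by
      funext n; simp [D]; abel
    rw [h1, ih]
    funext n
    rw [← Function.iterate_succ_apply, ← Function.iterate_succ_apply]

lemma D_iter_monomial [Module ℚ V] (N : ℕ) :
    ∀ d ≤ N, ∀ v : V, D^[N + 1] (fun n : ℤ => ((n : ℚ) ^ d) • v) = 0 := by
  induction N with
  | zero =>
    intro d hd v
    interval_cases d
    funext n
    simp [D]
  | succ N ih =>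
    intro d hd v
    have hD : D (fun n : ℤ => ((n : ℚ) ^ d) • v)
        = fun n : ℤ => ∑ k ∈ Finset.range d, (((n : ℤ) : ℚ) ^ k) • (((d.choose k : ℚ)) • v) := by
      funext n
      show ((((n : ℤ) + 1 : ℤ) : ℚ) ^ d) • v - ((n : ℚ) ^ d) • v = _
      push_cast
      rw [add_pow, Finset.sum_range_succ]
      simp only [one_pow, mul_one, Nat.choose_self, Nat.cast_one, pow_zero]
      rw [add_smul, add_sub_cancel_right, Finset.sum_smul]
      exact Finset.sum_congr rfl fun k _ => by rw [mul_smul]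
    rw [Function.iterate_succ_apply, hD, D_iter_sum]
    funext n
    refine Finset.sum_eq_zero fun k hk => ?_
    have hk' : k ≤ N := by
      have := Finset.mem_range.1 hk; omega
    rw [ih k hk' ((d.choose k : ℚ) • v)]
    rfl

lemma eq_zero_of_D_iter (m : ℕ) :
    ∀ g : ℤ → V, D^[m] g = 0 → (∀ k : ℕ, k < m → g k = 0) → ∀ n : ℤ, g n = 0 := by
  induction m with
  | zero => intro g h _ n; exact congrFun h n
  | succ m ih =>
    intro g h hk
    have hDg : ∀ n : ℤ, D g n = 0 := by
      refine ih (D g) (by rw [← Function.iterate_succ_apply]; exact h) ?_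
      intro k hkm
      have h1 := hk (k + 1) (by omega)
      have h0 := hk k (by omega)
      show g ((k : ℤ) + 1) - g k = 0
      rw [show ((k : ℤ) + 1) = ((k + 1 : ℕ) : ℤ) by push_cast; ring, h1, h0, sub_zero]
    have hstep : ∀ n : ℤ, g (n + 1) = g n := by
      intro n; have := hDg n; rw [D] at this; exact sub_eq_zero.1 this
    have hconst : ∀ n : ℤ, g n = g 0 := by
      intro n
      induction n using Int.induction_on with
      | zero => rfl
      | succ k ihk => rw [hstep, ihk]
      | pred k ihk => rw [← ihk, ← hstep (-(k:ℤ) - 1)]; ring_nf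
    intro n
    rw [hconst n]
    simpa using hk 0 (by omega)

lemma D_iter_eml (N : ℕ) :
    ∀ f : U → V, IsEMLPolynomialOfDegLE f N → ∀ u : U,
      D^[N + 1] (fun n : ℤ => f (n • u)) = 0 := by
  induction N with
  | zero =>
    intro f hf u
    funext n
    show D (fun n : ℤ => f (n • u)) n = 0
    rw [D, degLE_zero_const hf, degLE_zero_const hf ((n : ℤ) • u), sub_self]
  | succ N ih =>
    intro f hf u
    rw [Function.iterate_succ_apply]
    have h1 : D (fun n : ℤ => f (n • u)) = fun n : ℤ => (fun x => f (u + x) - f x) (n • u) := by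
      funext n
      rw [D]
      have : (n + 1) • u = u + n • u := by rw [add_smul, one_smul, add_comm]
      rw [this]
    rw [h1]
    exact ih _ (degLE_translate hf u) u

def vmat (m : ℕ) : Matrix (Fin m) (Fin m) ℚ := Matrix.vandermonde fun k => ((k : ℕ) : ℚ)

lemma vmat_det_isUnit (m : ℕ) : IsUnit (vmat m).det := by
  rw [isUnit_iff_ne_zero, vmat, Matrix.det_vandermonde]
  refine Finset.prod_ne_zero_iff.2 fun i _ => Finset.prod_ne_zero_iff.2 fun j hj => ?_
  have hij : (i : ℕ) < (j : ℕ) := Fin.lt_def.mp (Finset.mem_Ioi.1 hj)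
  have : ((i : ℕ) : ℚ) < ((j : ℕ) : ℚ) := by exact_mod_cast hij
  exact sub_ne_zero.2 (ne_of_gt this)

def coeffs [Module ℚ V] (m : ℕ) (w : Fin m → V) (d : Fin m) : V :=
  ∑ k, (vmat m)⁻¹ d k • w k

lemma vmat_apply (m : ℕ) (k d : Fin m) : vmat m k d = ((k : ℕ) : ℚ) ^ (d : ℕ) := rfl

lemma matrix_cancel [Module ℚ V] (m : ℕ) (A B : Matrix (Fin m) (Fin m) ℚ) (hAB : A * B = 1)
    (w : Fin m → V) (i : Fin m) :
    ∑ j, A i j • (∑ k, B j k • w k) = w i := by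
  have h1 : ∀ j, A i j • (∑ k, B j k • w k) = ∑ k, (A i j * B j k) • w k := by
    intro j
    rw [Finset.smul_sum]
    exact Finset.sum_congr rfl fun k _ => (smul_smul _ _ _)
  simp only [h1]
  rw [Finset.sum_comm]
  have h2 : ∀ k, (∑ j, (A i j * B j k) • w k) = ((A * B) i k) • w k := by
    intro k
    rw [← Finset.sum_smul, Matrix.mul_apply]
  simp only [h2, hAB, Matrix.one_apply]
  simp [Finset.sum_ite_eq', Finset.mem_univ]

lemma eval_coeffs [Module ℚ V] (m : ℕ) (w : Fin m → V) (k : Fin m) :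
    ∑ d : Fin m, (((k : ℕ) : ℚ) ^ (d : ℕ)) • coeffs m w d = w k := by
  have := matrix_cancel m (vmat m) (vmat m)⁻¹ (Matrix.mul_nonsing_inv _ (vmat_det_isUnit m)) w k
  simpa [coeffs, vmat_apply] using this

lemma coeffs_eval [Module ℚ V] (m : ℕ) (a : Fin m → V) (d : Fin m) :
    coeffs m (fun k => ∑ e : Fin m, (((k : ℕ) : ℚ) ^ (e : ℕ)) • a e) d = a d := by
  have := matrix_cancel m (vmat m)⁻¹ (vmat m) (Matrix.nonsing_inv_mul _ (vmat_det_isUnit m)) a d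
  simpa [coeffs, vmat_apply] using this

lemma coeffs_unique [Module ℚ V] (m : ℕ) (a b : Fin m → V)
    (h : ∀ n : ℤ, ∑ d : Fin m, ((n : ℚ) ^ (d : ℕ)) • a d
      = ∑ d : Fin m, ((n : ℚ) ^ (d : ℕ)) • b d) :
    a = b := by
  funext d
  have ha := coeffs_eval m a d
  have hb := coeffs_eval m b d
  rw [← ha, ← hb]
  congr 1
  funext k
  have := h ((k : ℕ) : ℤ)
  simpa using this

/-- The main interpolation identity. -/
lemma eval_eq [Module ℚ V] (N : ℕ) (f : U → V) (hf : IsEMLPolynomialOfDegLE f N)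
    (u : U) (n : ℤ) :
    f (n • u) = ∑ d : Fin (N + 1), ((n : ℚ) ^ (d : ℕ)) •
      coeffs (N + 1) (fun k => f (((k : ℕ) : ℤ) • u)) d := by
  set c : Fin (N + 1) → V := coeffs (N + 1) (fun k => f (((k : ℕ) : ℤ) • u)) with hc
  set g : ℤ → V :=
    fun n => f (n • u) - ∑ d : Fin (N + 1), ((n : ℚ) ^ (d : ℕ)) • c d with hg
  have hmono : ∀ d : Fin (N + 1), D^[N + 1] (fun n : ℤ => ((n : ℚ) ^ (d : ℕ)) • c d) = 0 :=
    fun d => D_iter_monomial N (d : ℕ) (Nat.lt_succ_iff.mp d.isLt) (c d)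
  have h4 := D_iter_sub (N + 1) (fun n : ℤ => f (n • u))
      (fun n : ℤ => ∑ d : Fin (N + 1), ((n : ℚ) ^ (d : ℕ)) • c d)
  have h5 := D_iter_sum (N + 1) Finset.univ
      (fun (d : Fin (N + 1)) (n : ℤ) => ((n : ℚ) ^ (d : ℕ)) • c d)
  have h1 : D^[N + 1] g = 0 := by
    rw [hg, h4]
    funext n
    rw [D_iter_eml N f hf u, h5]
    simp only [Pi.zero_apply]
    rw [zero_sub, neg_eq_zero]
    refine Finset.sum_eq_zero fun d _ => ?_
    rw [hmono d]
    rfl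
  have h2 : ∀ k : ℕ, k < N + 1 → g k = 0 := by
    intro k hkm
    have h3 := eval_coeffs (N + 1) (fun k => f (((k : ℕ) : ℤ) • u)) ⟨k, hkm⟩
    simp only [Fin.val_mk] at h3
    rw [hg]
    simp only
    rw [sub_eq_zero]
    rw [show (((k : ℕ) : ℤ) : ℚ) = ((k : ℕ) : ℚ) from by push_cast; ring]
    exact h3.symm
  have h6 := eq_zero_of_D_iter (N + 1) g h1 h2 n
  rw [hg] at h6
  simp only at h6
  exact sub_eq_zero.1 h6

lemma degLE_scale {f : U → V} {N : ℕ} (hf : IsEMLPolynomialOfDegLE f N) (z : ℤ) :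
    IsEMLPolynomialOfDegLE (fun u => f (z • u)) N := by
  intro v
  have h := hf (fun i => z • v i)
  unfold emlDeviation at h ⊢
  simpa [Finset.smul_sum] using h

lemma degLE_comb [Module ℚ V] {ι : Type*} (s : Finset ι) (q : ι → ℚ) (g : ι → U → V) (N : ℕ)
    (hg : ∀ k ∈ s, IsEMLPolynomialOfDegLE (g k) N) :
    IsEMLPolynomialOfDegLE (fun u => ∑ k ∈ s, q k • g k u) N := by
  intro v
  unfold emlDeviation
  have step : ∀ I : Finset (Fin (N + 1)),
      ((-1 : ℤ) ^ (N + 1 - I.card)) • (∑ k ∈ s, q k • g k (∑ i ∈ I, v i))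
        = ∑ k ∈ s, q k • (((-1 : ℤ) ^ (N + 1 - I.card)) • g k (∑ i ∈ I, v i)) := by
    intro I
    rw [Finset.smul_sum]
    exact Finset.sum_congr rfl fun k _ => smul_comm _ _ _
  simp only [step]
  rw [Finset.sum_comm]
  refine Finset.sum_eq_zero fun k hk => ?_
  rw [← Finset.smul_sum]
  have h := hg k hk v
  unfold emlDeviation at h
  rw [h, smul_zero]

end EMLAux

open EMLAux in
/-- An Eilenberg–Mac Lane polynomial function with values in a uniquely divisible group
(i.e. a `ℚ`-vector space) decomposes uniquely as a finite sum of homogeneous polynomial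
functions. -/
theorem eml_polynomial_homogeneous_decomposition
    (U : Type u) [AddCommGroup U] (V : Type v) [AddCommGroup V] [Module ℚ V]
    (f : U → V) (hf : IsEMLPolynomial f) :
    ∃! F : ℕ → U → V,
      {d | F d ≠ 0}.Finite ∧
      (∀ d, IsEMLPolynomial (F d)) ∧
      (∀ (d : ℕ) (n : ℤ) (u : U), F d (n • u) = n ^ d • F d u) ∧
      ∀ u : U, f u = ∑ᶠ d, F d u := by
  obtain ⟨N, hfN⟩ := hf
  set c : U → Fin (N + 1) → V :=
    fun u => coeffs (N + 1) (fun k => f (((k : ℕ) : ℤ) • u)) with hcdef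
  set F : ℕ → U → V := fun d u => if h : d < N + 1 then c u ⟨d, h⟩ else 0 with hFdef
  have hFpos : ∀ (d : ℕ) (h : d < N + 1) (u : U), F d u = c u ⟨d, h⟩ := by
    intro d h u; rw [hFdef]; exact dif_pos h
  have hFneg : ∀ (d : ℕ), ¬ d < N + 1 → F d = 0 := by
    intro d h; funext u; rw [hFdef]; exact dif_neg h
  have heval : ∀ (u : U) (n : ℤ),
      f (n • u) = ∑ d : Fin (N + 1), ((n : ℚ) ^ (d : ℕ)) • c u d :=
    fun u n => eval_eq N f hfN u n
  -- homogeneity at the level of c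
  have hchom : ∀ (u : U) (n : ℤ), c (n • u) = fun d : Fin (N + 1) => ((n : ℚ) ^ (d : ℕ)) • c u d := by
    intro u n
    refine coeffs_unique (N + 1) _ _ fun m => ?_
    have h1 := heval (n • u) m
    have h2 := heval u (m * n)
    rw [← smul_smul] at h2
    rw [h1] at h2
    rw [h2]
    refine Finset.sum_congr rfl fun d _ => ?_
    rw [smul_smul, ← mul_pow]
    push_cast
    ring_nf
  -- the four properties
  have hfin : {d | F d ≠ 0}.Finite := by
    refine Set.Finite.subset (Set.finite_Iio (N + 1)) fun d hd => ?_
    by_contra h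
    exact hd (hFneg d h)
  have hpoly : ∀ d, IsEMLPolynomial (F d) := by
    intro d
    by_cases h : d < N + 1
    · refine ⟨N, ?_⟩
      have : F d = fun u => ∑ k : Fin (N + 1),
          (vmat (N + 1))⁻¹ ⟨d, h⟩ k • f (((k : ℕ) : ℤ) • u) := by
        funext u; rw [hFpos d h u]; rfl
      rw [this]
      exact degLE_comb Finset.univ _ _ N fun k _ => degLE_scale hfN ((k : ℕ) : ℤ)
    · rw [hFneg d h]
      exact ⟨0, fun v => by unfold emlDeviation; simp⟩
  have hhom : ∀ (d : ℕ) (n : ℤ) (u : U), F d (n • u) = n ^ d • F d u := by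
    intro d n u
    by_cases h : d < N + 1
    · rw [hFpos d h, hFpos d h, congrFun (hchom u n) ⟨d, h⟩]
      rw [← Int.cast_smul_eq_zsmul ℚ (n ^ d)]
      push_cast
      rfl
    · rw [hFneg d h]
      simp
  have hsum : ∀ u : U, f u = ∑ᶠ d, F d u := by
    intro u
    have hsupp : (Function.support fun d => F d u) ⊆ ↑(Finset.range (N + 1)) := by
      intro d hd
      simp only [Finset.coe_range, Set.mem_Iio]
      by_contra h
      exact hd (congrFun (hFneg d h) u)
    rw [finsum_eq_sum_of_support_subset _ hsupp]
    rw [← Fin.sum_univ_eq_sum_range (fun d => F d u) (N + 1)]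
    have h1 := heval u 1
    simp only [one_smul, Int.cast_one, one_pow] at h1
    rw [h1]
    exact Finset.sum_congr rfl fun d _ => by rw [hFpos d d.isLt u]
  refine ⟨F, ⟨hfin, hpoly, hhom, hsum⟩, ?_⟩
  -- uniqueness
  intro G ⟨hGfin, _hGpoly, hGhom, hGsum⟩
  obtain ⟨M0, hM0⟩ := hGfin.bddAbove
  set M : ℕ := max (M0 + 1) (N + 1) with hM
  have hGzero : ∀ d : ℕ, ¬ d < M → G d = 0 := by
    intro d h
    by_contra hne
    have : d ≤ M0 := hM0 hne
    omega
  have hFzero : ∀ d : ℕ, ¬ d < M → F d = 0 := by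
    intro d h
    exact hFneg d (by omega)
  have key : ∀ (H : ℕ → U → V), (∀ d : ℕ, ¬ d < M → H d = 0) →
      (∀ (d : ℕ) (n : ℤ) (u : U), H d (n • u) = n ^ d • H d u) →
      (∀ u : U, f u = ∑ᶠ d, H d u) →
      ∀ (u : U) (n : ℤ),
        f (n • u) = ∑ d : Fin M, ((n : ℚ) ^ (d : ℕ)) • H (d : ℕ) u := by
    intro H hz hh hs u n
    rw [hs (n • u)]
    have hsupp : (Function.support fun d => H d (n • u)) ⊆ ↑(Finset.range M) := by
      intro d hd
      simp only [Finset.coe_range, Set.mem_Iio]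
      by_contra h
      exact hd (congrFun (hz d h) (n • u))
    rw [finsum_eq_sum_of_support_subset _ hsupp]
    rw [← Fin.sum_univ_eq_sum_range (fun d => H d (n • u)) M]
    refine Finset.sum_congr rfl fun d _ => ?_
    rw [hh (d : ℕ) n u, ← Int.cast_smul_eq_zsmul ℚ (n ^ (d : ℕ))]
    push_cast
    rfl
  funext d
  by_cases hd : d < M
  · funext u
    have hG := key G hGzero hGhom hGsum u
    have hF := key F hFzero hhom hsum u
    have h := coeffs_unique M (fun e : Fin M => G (e : ℕ) u) (fun e : Fin M => F (e : ℕ) u)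
      (fun n => by rw [← hG n, ← hF n])
    exact congrFun h ⟨d, hd⟩
  · rw [hGzero d hd, hFzero d hd]
end
end

section
/- Let A be a commutative ring and K a field which is a splitting field of the K-algebra A ⊗_ℤ K in the sense that the endomorphism ring of every simple A ⊗_ℤ K-module of finite K-dimension is reduced to K. For a ring homomorphism φ : A → K, let K_φ denote the (K,A)-bimodule with underlying abelian group K and actions λ·x·a = λ x φ(a). Then the bimodules K_φ, for φ ranging over the ring homomorphisms A → K, form a complete set of representatives of the isomorphism classes of simple (K,A)-bimodules of finite K-dimension: every such simple bimodule is isomorphic to K_φ for exactly one ring homomorphism φ : A → K. -/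
open scoped TensorProduct

universe u

noncomputable section

/-- A `(K, A)`-bimodule, i.e. a module over `A ⊗[ℤ] K`, is in particular a `K`-vector space,
via the inclusion `K → A ⊗[ℤ] K`. -/
def bimodKModule (A K : Type u) [CommRing A] [Field K] (M : Type u) [AddCommGroup M]
    [Module (A ⊗[ℤ] K) M] : Module K M :=
  Module.compHom M (Algebra.TensorProduct.includeRight (R := ℤ) (A := A) (B := K)).toRingHom

/-- For a ring homomorphism `φ : A → K`, the `(K, A)`-bimodule `K_φ`: the `K`-vector space `K`
with `A` acting through `φ`, i.e. the `A ⊗[ℤ] K`-module with action `(a ⊗ λ) • x = λ x φ a`. -/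
def KphiMod {A K : Type u} [CommRing A] [Field K] (_φ : A →+* K) : Type u := K

instance {A K : Type u} [CommRing A] [Field K] (φ : A →+* K) :
    AddCommGroup (KphiMod φ) :=
  inferInstanceAs (AddCommGroup K)

noncomputable instance {A K : Type u} [CommRing A] [Field K] (φ : A →+* K) :
    Module (A ⊗[ℤ] K) (KphiMod φ) :=
  Module.compHom K
    (Algebra.TensorProduct.productMap φ.toIntAlgHom (AlgHom.id ℤ K)).toRingHom

section Aux
variable {A K : Type u} [CommRing A] [Field K]

def toK {φ : A →+* K} (x : KphiMod φ) : K := x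
def ofK (φ : A →+* K) (x : K) : KphiMod φ := x

lemma kphi_smul (φ : A →+* K) (a : A) (l : K) (x : KphiMod φ) :
    (a ⊗ₜ[ℤ] l) • x = ofK φ (φ a * l * toK x) := by
  show (Algebra.TensorProduct.productMap φ.toIntAlgHom (AlgHom.id ℤ K)) (a ⊗ₜ l) * toK x = _
  simp [ofK]

lemma toK_ofK (φ : A →+* K) (x : K) : toK (ofK φ x) = x := rfl

lemma kphi_simple (φ : A →+* K) : IsSimpleModule (A ⊗[ℤ] K) (KphiMod φ) := by
  have : Nontrivial (KphiMod φ) := inferInstanceAs (Nontrivial K)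
  rw [isSimpleModule_iff]
  constructor
  intro N
  rcases eq_or_ne N ⊥ with h | h
  · exact Or.inl h
  · right
    obtain ⟨x, hxN, hx0⟩ := Submodule.exists_mem_ne_zero_of_ne_bot h
    have hx0' : toK x ≠ 0 := hx0
    rw [Submodule.eq_top_iff']
    intro y
    have : y = ((1 : A) ⊗ₜ[ℤ] (toK y * (toK x)⁻¹)) • x := by
      rw [kphi_smul]
      show y = ofK φ (φ 1 * (toK y * (toK x)⁻¹) * toK x)
      rw [map_one, one_mul, mul_assoc, inv_mul_cancel₀ hx0', mul_one]
      rfl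
    rw [this]
    exact N.smul_mem _ hxN

lemma c_unique {M : Type u} [AddCommGroup M] [Module (A ⊗[ℤ] K) M] [Nontrivial M]
    {c d : K} (h : ∀ m : M, ((1 : A) ⊗ₜ[ℤ] c) • m = ((1 : A) ⊗ₜ[ℤ] d) • m) : c = d := by
  by_contra hne
  have he : c - d ≠ 0 := sub_ne_zero.mpr hne
  obtain ⟨m, hm⟩ := exists_ne (0 : M)
  have h0 : ((1 : A) ⊗ₜ[ℤ] (c - d)) • m = 0 := by
    rw [TensorProduct.tmul_sub, sub_smul, h m, sub_self]
  apply hm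
  calc m = (1 : A ⊗[ℤ] K) • m := (one_smul _ m).symm
    _ = (((1 : A) ⊗ₜ[ℤ] (c - d)⁻¹) * ((1 : A) ⊗ₜ[ℤ] (c - d))) • m := by
        rw [Algebra.TensorProduct.tmul_mul_tmul, one_mul, inv_mul_cancel₀ he,
          Algebra.TensorProduct.one_def]
    _ = ((1 : A) ⊗ₜ[ℤ] (c - d)⁻¹) • (((1 : A) ⊗ₜ[ℤ] (c - d)) • m) := (mul_smul _ _ _)
    _ = 0 := by rw [h0, smul_zero]

end Aux

set_option maxHeartbeats 2000000 in
/-- **Classification of simple `(K, A)`-bimodules for `A` commutative.** If `K` is a splitting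
field of `A ⊗[ℤ] K` (every simple module of finite `K`-dimension has endomorphism ring reduced
to `K`), then the bimodules `K_φ`, for `φ` ranging over ring homomorphisms `A → K`, form a
complete set of representatives of isomorphism classes of simple `(K, A)`-bimodules of finite
`K`-dimension. -/
theorem simple_bimodules_classified_by_ring_homs
    (K : Type u) [Field K] (A : Type u) [CommRing A]
    (hsplit : ∀ (M : Type u) [AddCommGroup M] [Module (A ⊗[ℤ] K) M],
      IsSimpleModule (A ⊗[ℤ] K) M →
      @Module.Finite K M _ _ (bimodKModule A K M) →
      ∀ φ : M →ₗ[A ⊗[ℤ] K] M, ∃ c : K, ∀ m : M,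
        φ m = ((Algebra.TensorProduct.includeRight : K →ₐ[ℤ] A ⊗[ℤ] K) c) • m) :
    (∀ φ : A →+* K, IsSimpleModule (A ⊗[ℤ] K) (KphiMod φ)) ∧
    (∀ (M : Type u) [AddCommGroup M] [Module (A ⊗[ℤ] K) M],
      IsSimpleModule (A ⊗[ℤ] K) M →
      @Module.Finite K M _ _ (bimodKModule A K M) →
      ∃! φ : A →+* K, Nonempty (M ≃ₗ[A ⊗[ℤ] K] KphiMod φ)) := by
  refine ⟨kphi_simple, ?_⟩
  intro M _ _ hM hfin
  have : Nontrivial M := IsSimpleModule.nontrivial (A ⊗[ℤ] K) M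
  have key : ∀ a : A, ∃ c : K, ∀ m : M,
      (a ⊗ₜ[ℤ] (1 : K)) • m = ((1 : A) ⊗ₜ[ℤ] c) • m := by
    intro a
    obtain ⟨c, hc⟩ := hsplit M hM hfin (LinearMap.lsmul (A ⊗[ℤ] K) M (a ⊗ₜ[ℤ] (1 : K)))
    exact ⟨c, fun m => by simpa [Algebra.TensorProduct.includeRight_apply] using hc m⟩
  choose c hc using key
  have hact : ∀ (a : A) (y : K) (m : M),
      (a ⊗ₜ[ℤ] y) • m = ((1 : A) ⊗ₜ[ℤ] (c a * y)) • m := by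
    intro a y m
    have e1 : (a ⊗ₜ[ℤ] y : A ⊗[ℤ] K) = ((1 : A) ⊗ₜ[ℤ] y) * (a ⊗ₜ[ℤ] (1 : K)) := by
      rw [Algebra.TensorProduct.tmul_mul_tmul, one_mul, mul_one]
    rw [e1, mul_smul, hc a, ← mul_smul, Algebra.TensorProduct.tmul_mul_tmul, one_mul,
      mul_comm y (c a)]
  have hmul : ∀ a b : A, c (a * b) = c a * c b := by
    intro a b
    apply c_unique (M := M) (A := A)
    intro m
    have e1 : ((a * b) ⊗ₜ[ℤ] (1 : K) : A ⊗[ℤ] K) = (a ⊗ₜ[ℤ] (1 : K)) * (b ⊗ₜ[ℤ] (1 : K)) := by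
      rw [Algebra.TensorProduct.tmul_mul_tmul, mul_one]
    rw [← hc (a * b) m, e1, mul_smul, hact b, hact a, ← mul_smul,
      Algebra.TensorProduct.tmul_mul_tmul, one_mul, mul_one, mul_one]
  have hone : c 1 = 1 := by
    apply c_unique (M := M) (A := A)
    intro m
    rw [← hc 1 m]
  have hadd : ∀ a b : A, c (a + b) = c a + c b := by
    intro a b
    apply c_unique (M := M) (A := A)
    intro m
    rw [← hc (a + b) m, TensorProduct.add_tmul, add_smul, hc a, hc b,
      TensorProduct.tmul_add, add_smul]
  have hzero : c 0 = 0 := by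
    apply c_unique (M := M) (A := A)
    intro m
    rw [← hc 0 m, TensorProduct.zero_tmul, TensorProduct.tmul_zero]
  let φ : A →+* K :=
    { toFun := c, map_one' := hone, map_mul' := hmul, map_zero' := hzero, map_add' := hadd }
  have hφa : ∀ a, φ a = c a := fun _ => rfl
  obtain ⟨m₀, hm₀⟩ := exists_ne (0 : M)
  have fsmul : ∀ (t : A ⊗[ℤ] K) (x : KphiMod φ),
      ((1 : A) ⊗ₜ[ℤ] toK (t • x)) • m₀ = t • (((1 : A) ⊗ₜ[ℤ] toK x) • m₀) := by
    intro t x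
    induction t using TensorProduct.induction_on with
    | zero =>
        have h1 : toK ((0 : A ⊗[ℤ] K) • x) = 0 := by
          show (Algebra.TensorProduct.productMap φ.toIntAlgHom (AlgHom.id ℤ K)) 0 * toK x = 0
          rw [map_zero, zero_mul]
        have h2 := zero_smul (A ⊗[ℤ] K) (((1 : A) ⊗ₜ[ℤ] toK x) • m₀)
        rw [h1, h2]
        show ((1 : A) ⊗ₜ[ℤ] (0 : K)) • m₀ = 0
        rw [TensorProduct.tmul_zero]
        exact zero_smul (A ⊗[ℤ] K) m₀
    | tmul a l =>
        rw [kphi_smul, toK_ofK, ← mul_smul, Algebra.TensorProduct.tmul_mul_tmul, mul_one,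
          hact a, hφa, mul_assoc]
    | add t s ht hs =>
        rw [add_smul, add_smul]
        show ((1 : A) ⊗ₜ[ℤ] (toK (t • x) + toK (s • x))) • m₀ = _
        rw [TensorProduct.tmul_add, add_smul, ht, hs]
  let f : KphiMod φ →ₗ[A ⊗[ℤ] K] M :=
    { toFun := fun x => ((1 : A) ⊗ₜ[ℤ] toK x) • m₀
      map_add' := fun x y => by
        show ((1 : A) ⊗ₜ[ℤ] (toK x + toK y)) • m₀ = _
        rw [TensorProduct.tmul_add, add_smul]
      map_smul' := fun t x => fsmul t x }
  have hf1 : f (ofK φ 1) = m₀ := by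
    show ((1 : A) ⊗ₜ[ℤ] (1 : K)) • m₀ = m₀
    rw [← Algebra.TensorProduct.one_def, one_smul]
  have hinj : Function.Injective f := by
    rw [← LinearMap.ker_eq_bot]
    rcases (kphi_simple φ).eq_bot_or_eq_top (LinearMap.ker f) with h | h
    · exact h
    · exfalso
      have hmem : f (ofK φ 1) = 0 := by
        have : ofK φ 1 ∈ LinearMap.ker f := h ▸ Submodule.mem_top
        exact this
      rw [hf1] at hmem
      exact hm₀ hmem
  have hsurj : Function.Surjective f := by
    rw [← LinearMap.range_eq_top]
    rcases hM.eq_bot_or_eq_top (LinearMap.range f) with h | h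
    · exfalso
      have hmem : m₀ ∈ LinearMap.range f := ⟨ofK φ 1, hf1⟩
      rw [h, Submodule.mem_bot] at hmem
      exact hm₀ hmem
    · exact h
  refine ⟨φ, ⟨(LinearEquiv.ofBijective f ⟨hinj, hsurj⟩).symm⟩, ?_⟩
  rintro ψ ⟨e⟩
  ext a
  show ψ a = c a
  apply c_unique (M := M) (A := A)
  intro m
  rw [← hc a m]
  apply e.injective
  rw [map_smul, map_smul, kphi_smul, kphi_smul, map_one, one_mul, mul_one]
end
end
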